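/- arXiv:1007.4031 — 2 statements merged into one kernel-verified Lean document; each statement's English description precedes it below -/
import Mathlib

section
/- Among all trees on N ≥ 3 vertices, the star K_{1,N-1} is the unique tree with minimum average distance, and this minimum equals 2 - 2/N. -/
open SimpleGraph Finset

/-- Degree of a vertex (noncomputable, no decidability assumptions). -/
noncomputable def deg {V : Type*} [Fintype V] (G : SimpleGraph V) (u : V) : ℕ :=
  (G.neighborSet u).ncard

/-- Number of edges among the neighbors of `u` (as a rational, each edge counted once). -/
noncomputable def triC {V : Type*} [Fintype V] (G : SimpleGraph V) (u : V) : ℚ :=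
  ({p : V × V | G.Adj u p.1 ∧ G.Adj u p.2 ∧ G.Adj p.1 p.2}.ncard : ℚ) / 2

/-- Local clustering coefficient, with the convention that vertices of degree ≤ 1 have
clustering coefficient 1. -/
noncomputable def clust {V : Type*} [Fintype V] (G : SimpleGraph V) (u : V) : ℚ :=
  if deg G u ≤ 1 then 1 else triC G u / ((deg G u).choose 2)

/-- Sum of local clustering coefficients over all vertices. -/
noncomputable def totalClust {V : Type*} [Fintype V] (G : SimpleGraph V) : ℚ :=
  ∑ u, clust G u

/-- Number of edges of a graph. -/
noncomputable def edgeCount {V : Type*} [Fintype V] (G : SimpleGraph V) : ℕ :=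
  G.edgeSet.ncard

/-- Average distance of a (connected) graph: sum of pairwise shortest-path distances over
all unordered pairs of distinct vertices, divided by `N choose 2`.  (Ordered pairs are summed,
diagonal terms vanish, hence the factor 2.) -/
noncomputable def avgDist {V : Type*} [Fintype V] (G : SimpleGraph V) : ℚ :=
  (∑ u : V, ∑ v : V, (G.dist u v : ℚ)) / (2 * (Fintype.card V).choose 2)

/-- The star graph with center `c`: the center is adjacent to every other vertex and
there are no other edges. -/
def starGraph {V : Type*} (c : V) : SimpleGraph V where
  Adj u v := u ≠ v ∧ (u = c ∨ v = c)
  symm := ⟨fun u v h => ⟨h.1.symm, h.2.symm⟩⟩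
  loopless := ⟨fun u h => h.1 rfl⟩

/-! In a connected graph two distinct vertices are at distance 1 if adjacent and at least 2
otherwise, so `∑ dist + 2 |E| = 2 n (n - 1) + ∑ (dist - 2)⁺` over ordered pairs. A tree has
`n - 1` edges, hence `∑ dist ≥ 2 (n - 1)²`, i.e. average distance at least `2 - 2/n`, with
equality iff the diameter is at most 2. Such a tree is a star: the neighbour of a leaf is
adjacent to every other vertex, and a star is a maximal acyclic graph. -/

namespace SimpleGraph

variable {V : Type*} {G : SimpleGraph V}

-- `G.dist u v - 2` is truncated subtraction: the excess of the distance over 2.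
theorem Reachable.dist_add_ite_adj [DecidableEq V] [DecidableRel G.Adj] {u v : V}
    (h : G.Reachable u v) :
    G.dist u v + (if G.Adj u v then 1 else 0) = (if u = v then 0 else 2) + (G.dist u v - 2) := by
  by_cases huv : u = v
  · simp [huv]
  by_cases hadj : G.Adj u v
  · simp [huv, hadj, dist_eq_one_iff_adj.mpr hadj]
  · have := h.one_lt_dist_of_ne_of_not_adj huv hadj
    simp only [huv, hadj, if_false]
    omega

theorem Connected.sum_dist_add_two_mul_card_edgeFinset [Fintype V] [DecidableRel G.Adj]
    (hG : G.Connected) :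
    ∑ u, ∑ v, G.dist u v + 2 * #G.edgeFinset =
      2 * (Fintype.card V * (Fintype.card V - 1)) + ∑ u, ∑ v, (G.dist u v - 2) := by
  classical
  have hdeg (u : V) : ∑ v, (if G.Adj u v then 1 else 0) = G.degree u := by
    rw [sum_boole, ← neighborFinset_eq_filter, card_neighborFinset_eq_degree, Nat.cast_id]
  have hoff (u : V) : ∑ v, (if u = v then 0 else 2) = 2 * (Fintype.card V - 1) := by
    rw [← sum_erase_add _ _ (mem_univ u), if_pos rfl, add_zero,
      sum_congr rfl fun v hv => if_neg (ne_of_mem_erase hv).symm, sum_const, card_erase_of_mem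
      (mem_univ u), card_univ, smul_eq_mul, mul_comm]
  calc ∑ u, ∑ v, G.dist u v + 2 * #G.edgeFinset
      = ∑ u, ∑ v, (G.dist u v + if G.Adj u v then 1 else 0) := by
        simp only [sum_add_distrib, hdeg, sum_degrees_eq_twice_card_edges]
    _ = ∑ u, ∑ v, ((if u = v then 0 else 2) + (G.dist u v - 2)) := by
        simp only [(hG _ _).dist_add_ite_adj]
    _ = 2 * (Fintype.card V * (Fintype.card V - 1)) + ∑ u, ∑ v, (G.dist u v - 2) := by
        simp only [sum_add_distrib, hoff, sum_const, card_univ, smul_eq_mul]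
        ring

theorem IsTree.sum_dist_eq [Fintype V] (hG : G.IsTree) :
    ∑ u, ∑ v, G.dist u v = 2 * (Fintype.card V - 1) ^ 2 + ∑ u, ∑ v, (G.dist u v - 2) := by
  classical
  have hsum := hG.connected.sum_dist_add_two_mul_card_edgeFinset
  rw [← hG.card_edgeFinset, Nat.add_sub_cancel] at hsum ⊢
  linarith

theorem IsUniversal.dist_le_two {c : V} (hc : G.IsUniversal c) (u v : V) : G.dist u v ≤ 2 := by
  have hdist {w : V} : G.dist c w ≤ 1 := by
    by_cases hw : c = w
    · simp [hw]
    · exact (dist_eq_one_iff_adj.mpr (hc hw)).le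
  calc G.dist u v ≤ G.dist u c + G.dist c v := (Connected.of_isUniversal hc).dist_triangle
    _ ≤ 2 := by rw [dist_comm]; linarith [@hdist u, @hdist v]

theorem IsAcyclic.eq_starGraph_of_isUniversal {c : V} (hG : G.IsAcyclic) (hc : G.IsUniversal c) :
    G = starGraph c := by
  refine ((isTree_iff_maximal_isAcyclic.mp (isTree_starGraph c)).2.eq_of_le hG ?_).symm
  rintro u v ⟨huv, rfl | rfl⟩
  · exact hc huv
  · exact (hc huv.symm).symm

theorem IsTree.exists_isUniversal_of_forall_dist_le_two [Finite V] [Nontrivial V]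
    (hG : G.IsTree) (h : ∀ u v, G.dist u v ≤ 2) : ∃ c, G.IsUniversal c := by
  classical
  have := Fintype.ofFinite V
  obtain ⟨l, hl⟩ := hG.exists_vert_degree_one_of_nontrivial
  obtain ⟨c, hlc, hc⟩ := degree_eq_one_iff_existsUnique_adj.mp hl
  refine ⟨c, fun v hcv => ?_⟩
  by_cases hlv : l = v
  · exact hlv ▸ hlc.symm
  have hnadj : ¬G.Adj l v := fun hadj => hcv (hc v hadj).symm
  have h2 : G.edist l v = 2 := by
    rw [← (hG.connected l v).coe_dist_eq_edist]
    have hlt := hG.connected.one_lt_dist_of_ne_of_not_adj hlv hnadj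
    have hle := h l v
    norm_cast
    omega
  obtain ⟨w, hw⟩ := (edist_eq_two_iff.mp h2).2.2
  rw [mem_commonNeighbors] at hw
  exact hc w hw.1 ▸ hw.2.symm

theorem IsTree.forall_dist_le_two_iff [Finite V] [Nontrivial V] (hG : G.IsTree) :
    (∀ u v, G.dist u v ≤ 2) ↔ ∃ c, G = starGraph c := by
  refine ⟨fun h => ?_, ?_⟩
  · obtain ⟨c, hc⟩ := hG.exists_isUniversal_of_forall_dist_le_two h
    exact ⟨c, hG.isAcyclic.eq_starGraph_of_isUniversal hc⟩
  · rintro ⟨c, rfl⟩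
    exact isUniversal_starGraph_self.dist_le_two

theorem IsTree.avgDist_eq [Fintype V] (hG : G.IsTree) (hV : 2 ≤ Fintype.card V) :
    avgDist G = 2 - 2 / (Fintype.card V : ℚ) +
      (∑ u, ∑ v, (G.dist u v - 2) : ℕ) / (Fintype.card V * (Fintype.card V - 1)) := by
  have hV' : (2 : ℚ) ≤ Fintype.card V := by exact_mod_cast hV
  have hsum : ∑ u, ∑ v, (G.dist u v : ℚ) = ((∑ u, ∑ v, G.dist u v : ℕ) : ℚ) := by push_cast; rfl
  rw [avgDist, hsum, hG.sum_dist_eq, Nat.cast_choose_two]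
  have hV₁ : (Fintype.card V : ℚ) - 1 ≠ 0 := by linarith
  push_cast [Nat.cast_sub (by omega : 1 ≤ Fintype.card V)]
  field_simp

end SimpleGraph

theorem starGraph_eq_simpleGraph_starGraph {V : Type*} (c : V) :
    _root_.starGraph c = SimpleGraph.starGraph c := by
  ext
  simp [_root_.starGraph]

/-- Among all trees on `N ≥ 3` vertices, the star is the unique tree with minimum average
distance, and this minimum equals `2 - 2/N`. -/
theorem stmt2 {V : Type*} [Fintype V] (h3 : 3 ≤ Fintype.card V)
    (G : SimpleGraph V) (hT : G.IsTree) :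
    2 - 2 / (Fintype.card V : ℚ) ≤ avgDist G ∧
    (avgDist G = 2 - 2 / (Fintype.card V : ℚ) ↔ ∃ c : V, G = _root_.starGraph c) := by
  have : Nontrivial V := Fintype.one_lt_card_iff_nontrivial.mp (by omega)
  have hpos : (0 : ℚ) < Fintype.card V * (Fintype.card V - 1) := by
    have : (3 : ℚ) ≤ Fintype.card V := by exact_mod_cast h3
    nlinarith
  simp only [starGraph_eq_simpleGraph_starGraph, ← hT.forall_dist_le_two_iff,
    hT.avgDist_eq (by omega)]
  refine ⟨le_add_of_nonneg_right (by positivity), ?_⟩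
  rw [add_eq_left, div_eq_zero_iff, or_iff_left hpos.ne', Nat.cast_eq_zero]
  simp only [sum_eq_zero_iff, mem_univ, true_implies, Nat.sub_eq_zero_iff_le]
end

section
/- Let G be the graph consisting of a clique on N-1 vertices together with one additional (peripheral) vertex joined to exactly α of the clique vertices, where 1 ≤ α ≤ N-1 and N ≥ 4. Then the sum over all vertices of the local clustering coefficients equals N - α(N-1-α)/binom(N-1,2). -/
open SimpleGraph Finset

/-- Type I almost complete graph: all vertices other than `p` form a clique, and the
peripheral vertex `p` is adjacent exactly to the vertices in `A`. -/
def acGraphI {V : Type*} [DecidableEq V] (p : V) (A : Finset V) : SimpleGraph V where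
  Adj u v := u ≠ v ∧ ((u ≠ p ∧ v ≠ p) ∨ (u = p ∧ v ∈ A) ∨ (v = p ∧ u ∈ A))
  symm := ⟨by intro u v h; exact ⟨h.1.symm, by tauto⟩⟩
  loopless := ⟨fun u h => h.1 rfl⟩

/-!
Every vertex outside `A`, the peripheral vertex included, has a clique as neighbourhood, so its
clustering coefficient is `1`. A vertex of `A` is adjacent to all `N - 1` other vertices, and the
only non-adjacent pairs among them are `{p, v}` with `v` one of the `N - 1 - α` clique vertices
outside `A`; so its coefficient is `1 - (N - 1 - α) / binom(N - 1, 2)`.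
-/

section ClusteringCoefficient

variable {V : Type*} [Fintype V] (G : SimpleGraph V) [DecidableRel G.Adj]

lemma deg_eq_degree (u : V) : deg G u = G.degree u := by
  rw [deg, ← card_neighborFinset_eq_degree, ← Set.ncard_coe_finset, coe_neighborFinset]

lemma triC_eq [DecidableEq V] (u : V) :
    triC G u = (#{q ∈ (G.neighborFinset u).offDiag | G.Adj q.1 q.2} : ℚ) / 2 := by
  rw [triC, ← Set.ncard_coe_finset]
  congr 3
  ext q
  simp only [Set.mem_ofPred_eq, coe_filter, mem_offDiag, mem_neighborFinset]
  exact ⟨fun ⟨h1, h2, h3⟩ => ⟨⟨h1, h2, h3.ne⟩, h3⟩, fun ⟨⟨h1, h2, _⟩, h3⟩ => ⟨h1, h2, h3⟩⟩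

variable [DecidableEq V]

/-- Valid in every degree: below degree 2 there are no pairs of neighbours, and dividing by
`(G.degree u).choose 2 = 0` gives `0`. -/
lemma clust_eq_one_sub (u : V) :
    clust G u = 1 -
      (#{q ∈ (G.neighborFinset u).offDiag | ¬G.Adj q.1 q.2} : ℚ) / 2 / (G.degree u).choose 2 := by
  have hsplit := card_filter_add_card_filter_not (s := (G.neighborFinset u).offDiag)
    (fun q : V × V => G.Adj q.1 q.2)
  rw [offDiag_card, card_neighborFinset_eq_degree] at hsplit
  rw [clust, deg_eq_degree, triC_eq]
  set d := G.degree u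
  split_ifs with hd
  · rw [Nat.choose_eq_zero_of_lt (by omega), Nat.cast_zero, div_zero, sub_zero]
  · have hpairs : (#{q ∈ (G.neighborFinset u).offDiag | G.Adj q.1 q.2} : ℚ) +
        #{q ∈ (G.neighborFinset u).offDiag | ¬G.Adj q.1 q.2} = d * (d - 1) := by
      rw [← Nat.cast_add, hsplit, Nat.cast_sub (Nat.le_mul_self _)]; push_cast; ring
    have hd2 : (2 : ℚ) ≤ d := by exact_mod_cast (not_le.1 hd)
    have hd0 : (d : ℚ) ≠ 0 := by positivity
    have hd1 : (d : ℚ) - 1 ≠ 0 := by linarith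
    rw [Nat.cast_choose_two]
    field_simp
    linarith

lemma clust_eq_one_of_isClique {u : V} (h : G.IsClique (G.neighborSet u)) : clust G u = 1 := by
  have hempty : {q ∈ (G.neighborFinset u).offDiag | ¬G.Adj q.1 q.2} = ∅ := by
    refine filter_false_of_mem fun q hq => ?_
    rw [mem_offDiag, mem_neighborFinset, mem_neighborFinset] at hq
    exact not_not.2 (h hq.1 hq.2.1 hq.2.2)
  rw [clust_eq_one_sub, hempty, card_empty]
  simp

end ClusteringCoefficient

section AlmostCompleteGraph

variable {V : Type*} [DecidableEq V] {p : V} {A : Finset V}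

lemma acGraphI_adj {u v : V} :
    (acGraphI p A).Adj u v ↔
      u ≠ v ∧ ((u ≠ p ∧ v ≠ p) ∨ (u = p ∧ v ∈ A) ∨ (v = p ∧ u ∈ A)) := Iff.rfl

instance : DecidableRel (acGraphI p A).Adj := fun _ _ => decidable_of_iff _ acGraphI_adj.symm

lemma acGraphI_isClique_compl_singleton : (acGraphI p A).IsClique {p}ᶜ :=
  fun _ hu _ hv huv => ⟨huv, Or.inl ⟨hu, hv⟩⟩

lemma acGraphI_neighborSet_subset {u : V} (hu : u ∉ A) : (acGraphI p A).neighborSet u ⊆ {p}ᶜ := by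
  rintro v ⟨huv, h | ⟨rfl, -⟩ | ⟨-, h⟩⟩
  exacts [h.2, huv.symm, (hu h).elim]

variable [Fintype V]

lemma clust_acGraphI_of_notMem {u : V} (hu : u ∉ A) : clust (acGraphI p A) u = 1 :=
  clust_eq_one_of_isClique _
    (acGraphI_isClique_compl_singleton.subset (acGraphI_neighborSet_subset hu))

lemma acGraphI_neighborFinset_of_mem (hp : p ∉ A) {u : V} (hu : u ∈ A) :
    (acGraphI p A).neighborFinset u = univ.erase u := by
  ext v
  simp only [mem_neighborFinset, mem_erase, mem_univ, and_true, acGraphI_adj]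
  grind

lemma acGraphI_nonadjacent_pairs_of_mem (hp : p ∉ A) {u : V} (hu : u ∈ A) :
    {q ∈ ((acGraphI p A).neighborFinset u).offDiag | ¬(acGraphI p A).Adj q.1 q.2} =
      {p} ×ˢ (insert p A)ᶜ ∪ (insert p A)ᶜ ×ˢ {p} := by
  rw [acGraphI_neighborFinset_of_mem hp hu]
  ext ⟨a, b⟩
  simp only [mem_filter, mem_offDiag, mem_erase, mem_univ, and_true, acGraphI_adj, mem_union,
    mem_product, mem_singleton, mem_compl, mem_insert]
  grind

lemma clust_acGraphI_of_mem (hp : p ∉ A) {u : V} (hu : u ∈ A) :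
    clust (acGraphI p A) u =
      1 - ((Fintype.card V : ℚ) - 1 - A.card) / ((Fintype.card V - 1).choose 2 : ℚ) := by
  have hdisj : Disjoint ({p} ×ˢ (insert p A)ᶜ) ((insert p A)ᶜ ×ˢ {p}) :=
    disjoint_left.2 fun q h1 h2 => by
      simp only [mem_product, mem_singleton, mem_compl, mem_insert] at h1 h2
      exact h2.1 (Or.inl h1.1)
  have hdeg : (acGraphI p A).degree u = Fintype.card V - 1 := by
    rw [← card_neighborFinset_eq_degree, acGraphI_neighborFinset_of_mem hp hu,
      card_erase_of_mem (mem_univ u), card_univ]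
  have hout : (#(insert p A)ᶜ : ℚ) = Fintype.card V - 1 - A.card := by
    rw [card_compl, Nat.cast_sub (card_le_univ _), card_insert_of_notMem hp]
    push_cast
    ring
  rw [clust_eq_one_sub, acGraphI_nonadjacent_pairs_of_mem hp hu, card_union_of_disjoint hdisj,
    card_product, card_product, card_singleton, hdeg]
  push_cast
  rw [hout]
  ring

end AlmostCompleteGraph

theorem stmt8_general {V : Type*} [Fintype V] [DecidableEq V] (p : V) (A : Finset V)
    (hp : p ∉ A) :
    totalClust (acGraphI p A) =
      (Fintype.card V : ℚ) -
        (A.card : ℚ) * ((Fintype.card V : ℚ) - 1 - A.card) /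
          ((Fintype.card V - 1).choose 2 : ℚ) := by
  rw [totalClust, ← sum_add_sum_compl A, sum_congr rfl fun u hu => clust_acGraphI_of_mem hp hu,
    sum_congr rfl fun u hu => clust_acGraphI_of_notMem (mem_compl.1 hu)]
  simp only [sum_const, card_compl, nsmul_eq_mul, mul_one, Nat.cast_sub (card_le_univ A)]
  ring

/-- For the type I almost complete graph (clique on `N-1` vertices plus one peripheral
vertex of degree `α = |A|`), the total clustering equals
`N - α(N-1-α) / ((N-1) choose 2)`. -/
theorem stmt8 {V : Type*} [Fintype V] [DecidableEq V] (p : V) (A : Finset V)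
    (hp : p ∉ A) (h4 : 4 ≤ Fintype.card V)
    (hA1 : 1 ≤ A.card) (hA2 : A.card ≤ Fintype.card V - 1) :
    totalClust (acGraphI p A) =
      (Fintype.card V : ℚ) -
        (A.card : ℚ) * ((Fintype.card V : ℚ) - 1 - A.card) /
          ((Fintype.card V - 1).choose 2 : ℚ) :=
  stmt8_general p A hp
end
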